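/- Let a : ℕ → ℤ, not identically zero, with a_d = 0 for all d > v, and define f(m) = ∑_{d ∣ m} a_d · d · θ(m/d) with θ(n) = ∑_{e ∣ e} e·μ(e). Suppose the sequence (b_m)_{m≥0} defined by b_{m−1} = f(m) satisfies a linear recurrence of some order u ≥ 1 with constant integer coefficients and leading coefficient 1 for all m ≥ u. Then a contradiction arises; i.e., no such nonzero finitely-supported a exists. -/

import Mathlib

/-- `θ(n) = ∑_{e ∣ n} e · μ(e)`, where `μ` is the Möbius function. -/
def theta (n : ℕ) : ℤ :=
  ∑ e ∈ n.divisors, (e : ℤ) * ArithmeticFunction.moebius e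

/-- `f(m) = ∑_{d ∣ m} a_d · d · θ(m/d)`. -/
def convTheta (a : ℕ → ℤ) (m : ℕ) : ℤ :=
  ∑ d ∈ m.divisors, a d * d * theta (m / d)

/-!
If `f = convTheta a` satisfied the recurrence, an integer `K` dividing `u` consecutive values
`f (N + 1), …, f (N + u)` with `N ≥ u` would divide every later value. Since
`θ n = ∏_{p ∣ n} (1 - p)`, a prime `q > v` dividing `m` (hence `m / d` for every `d` in the
support of `a`) makes `1 - q` divide `f m`. Taking primes `q_k ≡ 1 [MOD K]` above `v` and, by the
Chinese remainder theorem, `N` with `q_k ∣ N + k` gives `K ∣ f (N + k)` for `k = 1, …, u`. On the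
other hand, if `l` is the least index with `a l ≠ 0` and `p > v` is prime, then
`f (l p^i) = a_l l (1 - p) =: D ≠ 0` for all `i ≥ 1`, which `K = |D| + 1` cannot divide.
-/

open ArithmeticFunction Function Filter
open scoped ArithmeticFunction.zeta ArithmeticFunction.Moebius

lemma dvd_of_linear_recurrence {R : Type*} [CommRing R] {f c : ℕ → R} {u : ℕ}
    (hrec : ∀ m, u ≤ m → f (m + 1) + ∑ j ∈ Finset.Icc 1 u, c j * f (m - j + 1) = 0)
    {D : R} {N : ℕ} (hN : u ≤ N) (hbase : ∀ k ∈ Finset.Icc 1 u, D ∣ f (N + k)) :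
    ∀ m, N < m → D ∣ f m := by
  intro m
  induction m using Nat.strong_induction_on with
  | _ m ih =>
    intro hNm
    by_cases hm : m ≤ N + u
    · simpa [show N + (m - N) = m by omega] using
        hbase (m - N) (Finset.mem_Icc.2 ⟨by omega, by omega⟩)
    obtain ⟨m, rfl⟩ : ∃ m', m = m' + 1 := ⟨m - 1, by omega⟩
    rw [eq_neg_of_add_eq_zero_left (hrec m (by omega)), dvd_neg]
    refine Finset.dvd_sum fun j hj ↦ (ih _ ?_ ?_).mul_left _ <;> grind

lemma Nat.exists_le_forall_dvd_add {s : ℕ → ℕ} {t : Finset ℕ} (hs : ∀ k ∈ t, s k ≠ 0)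
    (hcop : Set.Pairwise t (Nat.Coprime on s)) (B : ℕ) :
    ∃ N, B ≤ N ∧ ∀ k ∈ t, s k ∣ N + k := by
  obtain ⟨x, hx⟩ := Nat.chineseRemainderOfFinset (fun k ↦ (s k - 1) * k) s t hs hcop
  have hP : 0 < ∏ k ∈ t, s k := Finset.prod_pos fun k hk ↦ Nat.pos_of_ne_zero (hs k hk)
  refine ⟨x + B * ∏ k ∈ t, s k, Nat.le_add_left_of_le (Nat.le_mul_of_pos_right B hP),
    fun k hk ↦ ?_⟩
  have hxk : x + k ≡ 0 [MOD s k] := calc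
    x + k ≡ (s k - 1) * k + k [MOD s k] := (hx k hk).add_right k
    _ = s k * k := by rw [← add_one_mul, Nat.sub_one_add_one (hs k hk)]
    _ ≡ 0 [MOD s k] := Nat.modEq_zero_iff_dvd.2 (dvd_mul_right _ _)
  rw [add_right_comm]
  exact dvd_add (Nat.modEq_zero_iff_dvd.1 hxk) ((Finset.dvd_prod_of_mem s hk).mul_left B)

lemma coe_zeta_mul_pmul_id_moebius :
    (ζ : ArithmeticFunction ℤ) * pmul (ArithmeticFunction.id : ArithmeticFunction ℤ) μ =
      prodPrimeFactors fun p ↦ 1 - (p : ℤ) := by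
  have hmul := isMultiplicative_zeta.natCast.mul
    (isMultiplicative_id.natCast.pmul isMultiplicative_moebius)
  rw [IsMultiplicative.eq_iff_eq_on_prime_powers _ hmul _ (IsMultiplicative.prodPrimeFactors _)]
  rintro p (_ | i) hp
  · simp
  rw [coe_zeta_mul_apply, Nat.sum_divisors_prime_pow hp, Finset.sum_range_succ',
    Finset.sum_range_succ', Finset.sum_eq_zero fun k _ ↦ ?_,
    prodPrimeFactors_apply (pow_ne_zero _ hp.ne_zero),
    Nat.primeFactors_prime_pow i.succ_ne_zero hp]
  · simp [moebius_apply_prime hp, sub_eq_neg_add]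
  · simp [pmul_apply, moebius_apply_prime_pow hp]

lemma theta_eq_prod_primeFactors {n : ℕ} (hn : n ≠ 0) :
    theta n = ∏ p ∈ n.primeFactors, (1 - (p : ℤ)) := by
  have := congr($coe_zeta_mul_pmul_id_moebius n)
  rw [coe_zeta_mul_apply, prodPrimeFactors_apply hn] at this
  simpa [theta, pmul_apply] using this

lemma theta_prime_pow {p i : ℕ} (hp : p.Prime) (hi : i ≠ 0) : theta (p ^ i) = 1 - p := by
  rw [theta_eq_prod_primeFactors (pow_ne_zero i hp.ne_zero), Nat.primeFactors_prime_pow hi hp,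
    Finset.prod_singleton]

lemma one_sub_dvd_theta {p n : ℕ} (hp : p ∈ n.primeFactors) : (1 - p : ℤ) ∣ theta n := by
  rw [theta_eq_prod_primeFactors (Nat.mem_primeFactors.1 hp).2.2]
  exact Finset.dvd_prod_of_mem _ hp

section convTheta

variable {v : ℕ} {a : ℕ → ℤ}

lemma Nat.Prime.coprime_of_apply_ne_zero (ha : ∀ d, v < d → a d = 0) {p : ℕ} (hp : p.Prime)
    (hpv : v < p) {d : ℕ} (hd : 0 < d) (had : a d ≠ 0) : p.Coprime d :=
  hp.coprime_iff_not_dvd.2 fun hpd ↦ had (ha d (hpv.trans_le (Nat.le_of_dvd hd hpd)))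

lemma one_sub_dvd_convTheta (ha : ∀ d, v < d → a d = 0) {p m : ℕ} (hp : p.Prime) (hpv : v < p)
    (hpm : p ∣ m) : (1 - p : ℤ) ∣ convTheta a m := by
  refine Finset.dvd_sum fun d hd ↦ ?_
  rcases eq_or_ne (a d) 0 with had | had
  · simp [had]
  obtain ⟨⟨e, rfl⟩, hm⟩ := Nat.mem_divisors.mp hd
  have hd0 : 0 < d := Nat.pos_of_mem_divisors hd
  rw [Nat.mul_div_cancel_left e hd0]
  have hpe : p ∣ e := (hp.coprime_of_apply_ne_zero ha hpv hd0 had).dvd_of_dvd_mul_left hpm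
  exact (one_sub_dvd_theta (Nat.mem_primeFactors.2 ⟨hp, hpe, right_ne_zero_of_mul hm⟩)).mul_left _

lemma convTheta_mul_prime_pow (ha : ∀ d, v < d → a d = 0) {l : ℕ} (hl : 0 < l)
    (hmin : ∀ d, 0 < d → d < l → a d = 0) {p i : ℕ} (hp : p.Prime) (hpv : v < p) (hi : i ≠ 0) :
    convTheta a (l * p ^ i) = a l * l * (1 - p) := by
  rw [convTheta, Finset.sum_eq_single l, Nat.mul_div_cancel_left _ hl, theta_prime_pow hp hi]
  · intro d hd hdl
    have hd0 : 0 < d := Nat.pos_of_mem_divisors hd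
    suffices a d = 0 by simp [this]
    by_contra had
    have hdl' : d ∣ l := ((hp.coprime_of_apply_ne_zero ha hpv hd0 had).pow_left i).symm
      |>.dvd_of_dvd_mul_right (Nat.dvd_of_mem_divisors hd)
    exact had (hmin d hd0 ((Nat.le_of_dvd hl hdl').lt_of_ne hdl))
  · intro h
    exact absurd (Nat.mem_divisors.mpr ⟨dvd_mul_right _ _, by simp [hl.ne', hp.ne_zero]⟩) h

lemma exists_le_forall_dvd_convTheta_add (ha : ∀ d, v < d → a d = 0) {K : ℕ} (hK : K ≠ 0)
    (t : Finset ℕ) (B : ℕ) : ∃ N, B ≤ N ∧ ∀ k ∈ t, (K : ℤ) ∣ convTheta a (N + k) := by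
  have hinf : ({p | p.Prime ∧ p ≡ 1 [MOD K]} \ Set.Iic v).Infinite :=
    (Nat.infinite_setOfPred_prime_modEq_one hK).sdiff (Set.finite_Iic v)
  set q := hinf.natEmbedding
  have hq (k : ℕ) : (q k : ℕ).Prime ∧ q k ≡ 1 [MOD K] ∧ v < q k := by
    obtain ⟨⟨hprime, hmod⟩, hv⟩ := (q k).2
    exact ⟨hprime, hmod, not_le.1 hv⟩
  have hcop : Set.Pairwise t (Nat.Coprime on fun k ↦ (q k : ℕ)) := fun k _ k' _ hkk' ↦
    (Nat.coprime_primes (hq k).1 (hq k').1).2 fun h ↦ hkk' (q.injective (Subtype.ext h))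
  obtain ⟨N, hBN, hdvd⟩ := Nat.exists_le_forall_dvd_add (fun k _ ↦ (hq k).1.ne_zero) hcop B
  refine ⟨N, hBN, fun k hk ↦ ?_⟩
  exact (Nat.modEq_iff_dvd.1 (hq k).2.1).trans
    (one_sub_dvd_convTheta ha (hq k).1 (hq k).2.2 (hdvd k hk))

lemma exists_ne_zero_frequently_convTheta_eq (ha : ∀ d, v < d → a d = 0)
    (hne : ∃ d, 0 < d ∧ a d ≠ 0) : ∃ D ≠ 0, ∃ᶠ m in atTop, convTheta a m = D := by
  classical
  set l := Nat.find hne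
  obtain ⟨hl, hal⟩ : 0 < l ∧ a l ≠ 0 := Nat.find_spec hne
  have hmin : ∀ d, 0 < d → d < l → a d = 0 := fun d hd hdl ↦
    not_not.1 fun had ↦ Nat.find_min hne hdl ⟨hd, had⟩
  obtain ⟨p, hpv, hp⟩ := Nat.exists_infinite_primes (v + 1)
  refine ⟨a l * l * (1 - p), ?_, frequently_atTop.2 fun B ↦ ?_⟩
  · have : (1 - p : ℤ) ≠ 0 := by have := hp.two_le; omega
    exact mul_ne_zero (mul_ne_zero hal (by exact_mod_cast hl.ne')) this
  refine ⟨l * p ^ (B + 1), ?_, convTheta_mul_prime_pow ha hl hmin hp hpv B.succ_ne_zero⟩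
  have := Nat.lt_pow_self (n := B + 1) hp.one_lt
  have := Nat.le_mul_of_pos_left (p ^ (B + 1)) hl
  omega

end convTheta

theorem no_recurrence_general (v : ℕ) (a : ℕ → ℤ) (ha : ∀ d, v < d → a d = 0)
    (hne : ∃ d, 0 < d ∧ a d ≠ 0) (u : ℕ) (c : ℕ → ℤ)
    (hrec : ∀ m, u ≤ m →
      convTheta a (m + 1) + ∑ j ∈ Finset.Icc 1 u, c j * convTheta a (m - j + 1) = 0) :
    False := by
  obtain ⟨D, hD, hfreq⟩ := exists_ne_zero_frequently_convTheta_eq ha hne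
  obtain ⟨N, huN, hbase⟩ :=
    exists_le_forall_dvd_convTheta_add ha (K := D.natAbs + 1) (by omega) (Finset.Icc 1 u) u
  obtain ⟨m, hm, hNm⟩ := (hfreq.and_eventually (eventually_gt_atTop N)).exists
  have hdvd := dvd_of_linear_recurrence hrec huN hbase m hNm
  rw [hm, Int.natCast_dvd] at hdvd
  have := Nat.le_of_dvd (Int.natAbs_pos.2 hD) hdvd
  omega

/-- Let `a : ℕ → ℤ`, not identically zero on positive integers, with `a_d = 0`
for all `d > v`, and let `f(m) = ∑_{d ∣ m} a_d · d · θ(m/d)`. If the sequence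
`b_m = f(m+1)` (i.e. `b_{m−1} = f(m)`) satisfies a linear recurrence of some
order `u ≥ 1` with constant integer coefficients and leading coefficient `1`,
for all `m ≥ u`, then a contradiction arises. -/
theorem no_recurrence (v : ℕ) (a : ℕ → ℤ) (ha : ∀ d, v < d → a d = 0)
    (hne : ∃ d, 0 < d ∧ a d ≠ 0) (u : ℕ) (hu : 1 ≤ u) (c : ℕ → ℤ)
    (hrec : ∀ m, u ≤ m →
      convTheta a (m + 1) + ∑ j ∈ Finset.Icc 1 u, c j * convTheta a (m - j + 1) = 0) :
    False :=
  no_recurrence_general v a ha hne u c hrec
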